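/- For all real numbers x, y > 0, the inequality (x·Γ(y)/Γ(y + y/x))^x · (y·Γ(x)/Γ(x + x/y))^y ≤ 1 holds, with equality if and only if x = y. -/

import Mathlib

open Real Filter Topology

/-!
Write `L = log ∘ Γ` and, for `y < x` and `t ≥ 0`, `R t = gammaRemainder x y t`, i.e.
`R t = x (L (y + t + y/x) - L (y + t + 1)) + y (L (x + t + x/y) - L (x + t + 1))
  - (x - y) (log (x + t) - log (y + t))`,
so that the logarithm of the product is `-R 0` by `L (s + 1) = L s + log s`.
The same recurrence turns `R t - R (t + 1)` into a sum of two logarithms, which `log u ≥ 1 - 1/u`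
bounds below by `t (x - y)² / ((x + t)(y + t)(x + t + 1)(y + t + 1))`; hence `R` decreases along
`t ∈ ℕ`, strictly from `1` to `2`. Convexity of `L`, compared with its slopes `log s` on
`[s, s + 1]`, gives `R t ≥ -(x - y)/(y + t) → 0`, so `R 2 ≥ 0` and `R 0 > 0`.
For `x = y` each factor is `x Γ(x) / Γ(x + 1) = 1`.
-/

lemma log_Gamma_add_one {s : ℝ} (hs : 0 < s) :
    log (Gamma (s + 1)) = log s + log (Gamma s) := by
  rw [Gamma_add_one hs.ne', log_mul hs.ne' (Gamma_pos_of_pos hs).ne']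

lemma sub_div_le_log_sub_log {p q : ℝ} (hp : 0 < p) (hq : 0 < q) :
    (p - q) / p ≤ log p - log q := by
  have h := one_sub_inv_le_log_of_pos (div_pos hp hq)
  rwa [inv_div, log_div hp.ne' hq.ne', one_sub_div hp.ne'] at h

lemma sub_one_mul_log_le_log_Gamma_sub {s k : ℝ} (hs : 0 < s) (hk : 1 < k) :
    (k - 1) * log s ≤ log (Gamma (s + k)) - log (Gamma (s + 1)) := by
  have h := convexOn_log_Gamma.slope_mono_adjacent (Set.mem_Ioi.mpr hs)
    (Set.mem_Ioi.mpr (by linarith : 0 < s + k)) (lt_add_one s) (by linarith : s + 1 < s + k)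
  simp only [Function.comp_apply, add_sub_cancel_left, div_one, log_Gamma_add_one hs] at h
  rw [le_div_iff₀ (by linarith)] at h
  rw [log_Gamma_add_one hs]
  linarith

lemma log_Gamma_sub_le_one_sub_mul_log {s h : ℝ} (hsh : 0 < s + h) (hh : h < 1) :
    log (Gamma (s + 1)) - log (Gamma (s + h)) ≤ (1 - h) * log (s + 1) := by
  have hs : 0 < s + 1 := by linarith
  have h' := convexOn_log_Gamma.slope_mono_adjacent (Set.mem_Ioi.mpr hsh)
    (Set.mem_Ioi.mpr (by linarith : 0 < s + 1 + 1)) (by linarith : s + h < s + 1) (lt_add_one _)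
  simp only [Function.comp_apply, add_sub_cancel_left, div_one, log_Gamma_add_one hs] at h'
  rw [div_le_iff₀ (by linarith)] at h'
  linarith

noncomputable def gammaProduct (x y : ℝ) : ℝ :=
  (x * Gamma y / Gamma (y + y / x)) ^ x * (y * Gamma x / Gamma (x + x / y)) ^ y

lemma gammaProduct_comm (x y : ℝ) : gammaProduct x y = gammaProduct y x :=
  mul_comm _ _

lemma gammaProduct_self {x : ℝ} (hx : 0 < x) : gammaProduct x x = 1 := by
  have h : x * Gamma x / Gamma (x + x / x) = 1 := by
    rw [div_self hx.ne', Gamma_add_one hx.ne']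
    exact div_self (by positivity)
  rw [gammaProduct, h, one_rpow, mul_one]

noncomputable def gammaRemainder (x y t : ℝ) : ℝ :=
  x * (log (Gamma (y + t + y / x)) - log (Gamma (y + t + 1))) +
    y * (log (Gamma (x + t + x / y)) - log (Gamma (x + t + 1))) -
    (x - y) * (log (x + t) - log (y + t))

lemma gammaRemainder_sub_add_one_ge {x y t : ℝ} (hx : 0 < x) (hy : 0 < y) (ht : 0 ≤ t) :
    t * (x - y) ^ 2 / ((x + t) * (y + t) * ((x + t + 1) * (y + t + 1))) ≤
      gammaRemainder x y t - gammaRemainder x y (t + 1) := by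
  have hb : 0 < y + t := by linarith
  have ha : 0 < x + t := by linarith
  have hbh : 0 < y + t + y / x := by positivity
  have hak : 0 < x + t + x / y := by positivity
  have key : gammaRemainder x y t - gammaRemainder x y (t + 1) =
      x * (log ((x + t + 1) * (y + t)) - log ((x + t) * (y + t + y / x))) +
      y * (log ((y + t + 1) * (x + t)) - log ((y + t) * (x + t + x / y))) := by
    simp only [gammaRemainder, ← add_assoc]
    rw [add_right_comm (y + t) 1, add_right_comm (x + t) 1, log_Gamma_add_one hbh,
      log_Gamma_add_one hak, log_Gamma_add_one (by linarith : 0 < y + t + 1),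
      log_Gamma_add_one (by linarith : 0 < x + t + 1), log_mul (by positivity) hb.ne',
      log_mul ha.ne' hbh.ne', log_mul (by positivity) ha.ne', log_mul hb.ne' hak.ne']
    ring
  have lx := mul_le_mul_of_nonneg_left
    (sub_div_le_log_sub_log (by positivity : 0 < (x + t + 1) * (y + t))
      (by positivity : 0 < (x + t) * (y + t + y / x))) hx.le
  have ly := mul_le_mul_of_nonneg_left
    (sub_div_le_log_sub_log (by positivity : 0 < (y + t + 1) * (x + t))
      (by positivity : 0 < (y + t) * (x + t + x / y))) hy.le
  have sum : x * (((x + t + 1) * (y + t) - (x + t) * (y + t + y / x)) / ((x + t + 1) * (y + t))) +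
      y * (((y + t + 1) * (x + t) - (y + t) * (x + t + x / y)) / ((y + t + 1) * (x + t))) =
      t * (x - y) ^ 2 / ((x + t) * (y + t) * ((x + t + 1) * (y + t + 1))) := by
    field_simp
    ring
  linarith

lemma neg_div_le_gammaRemainder {x y t : ℝ} (hy : 0 < y) (hxy : y < x) (ht : 0 ≤ t) :
    -((x - y) / (y + t)) ≤ gammaRemainder x y t := by
  have hx : 0 < x := hy.trans hxy
  have hb : 0 < y + t := by linarith
  have hk := mul_le_mul_of_nonneg_left
    (sub_one_mul_log_le_log_Gamma_sub (by linarith : 0 < x + t) ((one_lt_div hy).mpr hxy)) hy.le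
  have hh := mul_le_mul_of_nonneg_left
    (log_Gamma_sub_le_one_sub_mul_log (by positivity : 0 < y + t + y / x)
      ((div_lt_one hx).mpr hxy)) hx.le
  have hlog := mul_le_mul_of_nonneg_left
    (sub_div_le_log_sub_log hb (by linarith : 0 < y + t + 1)) (sub_nonneg.mpr hxy.le)
  rw [← mul_assoc, mul_sub_one, mul_div_cancel₀ _ hy.ne'] at hk
  rw [← mul_assoc, mul_one_sub, mul_div_cancel₀ _ hx.ne'] at hh
  rw [show y + t - (y + t + 1) = -1 by ring, neg_div, mul_neg, mul_one_div] at hlog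
  unfold gammaRemainder
  linarith

lemma gammaRemainder_zero_pos {x y : ℝ} (hy : 0 < y) (hxy : y < x) :
    0 < gammaRemainder x y 0 := by
  have hx : 0 < x := hy.trans hxy
  have step (t : ℝ) (ht : 0 ≤ t) : gammaRemainder x y (t + 1) ≤ gammaRemainder x y t := by
    have := gammaRemainder_sub_add_one_ge hx hy ht
    have : 0 ≤ t * (x - y) ^ 2 / ((x + t) * (y + t) * ((x + t + 1) * (y + t + 1))) := by
      positivity
    linarith
  have anti : Antitone fun n : ℕ ↦ gammaRemainder x y n := antitone_nat_of_succ_le fun n ↦ by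
    simpa using step n n.cast_nonneg
  have lim : Tendsto (fun n : ℕ ↦ -((x - y) / (y + n))) atTop (𝓝 0) := by
    simpa using (tendsto_const_nhds.div_atTop
      (tendsto_atTop_add_const_left _ y tendsto_natCast_atTop_atTop)).neg
  have two_nonneg : 0 ≤ gammaRemainder x y 2 := by
    refine le_of_tendsto lim (eventually_atTop.2 ⟨2, fun n hn ↦ ?_⟩)
    simpa using (neg_div_le_gammaRemainder hy hxy n.cast_nonneg).trans (anti hn)
  have gap := gammaRemainder_sub_add_one_ge hx hy zero_le_one
  have gap_pos : 0 < 1 * (x - y) ^ 2 / ((x + 1) * (y + 1) * ((x + 1 + 1) * (y + 1 + 1))) := by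
    have := pow_pos (sub_pos.2 hxy) 2
    positivity
  have first := step 0 le_rfl
  rw [one_add_one_eq_two] at gap
  rw [zero_add] at first
  linarith

lemma log_gammaProduct_eq_neg_gammaRemainder {x y : ℝ} (hx : 0 < x) (hy : 0 < y) :
    log (gammaProduct x y) = -gammaRemainder x y 0 := by
  rw [gammaProduct, log_mul (by positivity) (by positivity), log_rpow (by positivity),
    log_rpow (by positivity), log_div (by positivity) (by positivity),
    log_div (by positivity) (by positivity), log_mul hx.ne' (by positivity),
    log_mul hy.ne' (by positivity), gammaRemainder]
  simp only [add_zero]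
  rw [log_Gamma_add_one hx, log_Gamma_add_one hy]
  ring

lemma gammaProduct_lt_one {x y : ℝ} (hy : 0 < y) (hxy : y < x) : gammaProduct x y < 1 := by
  have hx : 0 < x := hy.trans hxy
  have pos : 0 < gammaProduct x y := by
    unfold gammaProduct
    positivity
  rw [← log_neg_iff pos, log_gammaProduct_eq_neg_gammaRemainder hx hy, neg_neg_iff_pos]
  exact gammaRemainder_zero_pos hy hxy

theorem gamma_inequality (x y : ℝ) (hx : 0 < x) (hy : 0 < y) :
    (x * Gamma y / Gamma (y + y / x)) ^ x * (y * Gamma x / Gamma (x + x / y)) ^ y ≤ 1 ∧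
    ((x * Gamma y / Gamma (y + y / x)) ^ x * (y * Gamma x / Gamma (x + x / y)) ^ y = 1 ↔
      x = y) := by
  change gammaProduct x y ≤ 1 ∧ (gammaProduct x y = 1 ↔ x = y)
  rcases lt_trichotomy x y with hxy | rfl | hxy
  · have h := gammaProduct_comm x y ▸ gammaProduct_lt_one hx hxy
    exact ⟨h.le, iff_of_false h.ne hxy.ne⟩
  · exact ⟨(gammaProduct_self hx).le, iff_of_true (gammaProduct_self hx) rfl⟩
  · have h := gammaProduct_lt_one hy hxy
    exact ⟨h.le, iff_of_false h.ne hxy.ne'⟩
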